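/- Let c ≥ 2 be an integer and let p_1, p_2, …, p_c be nonnegative integers with s = p_1 + p_2 + ⋯ + p_c > 0. Then there exists a c-edge-colored graph G with no properly colored cycle such that δ_mon(G) = min { p_i : i = 1, …, c } and the number of vertices of G is at most s·c^s. -/

import Mathlib

/-- The number of edges of color `i` incident with the vertex `x` in the
`c`-edge-colored graph `(G, χ)`. -/
noncomputable def monDeg {V : Type} {c : ℕ} (G : SimpleGraph V) (χ : Sym2 V → Fin c)
    (x : V) (i : Fin c) : ℕ :=
  Nat.card {y : V // G.Adj x y ∧ χ s(x, y) = i}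

/-- The minimum monochromatic degree `δ_mon(G)` of a `c`-edge-colored graph. -/
noncomputable def minMonDeg {V : Type} {c : ℕ} (G : SimpleGraph V) (χ : Sym2 V → Fin c) : ℕ :=
  sInf {k : ℕ | ∃ (x : V) (i : Fin c), monDeg G χ x i = k}

/-- `(G, χ)` has a properly colored cycle: a cycle in which no two consecutive
edges (cyclically, including the final/first pair) have the same color. -/
def HasProperlyColoredCycle {V : Type} {c : ℕ} (G : SimpleGraph V)
    (χ : Sym2 V → Fin c) : Prop :=
  ∃ (v : V) (w : G.Walk v v), w.IsCycle ∧
    ∀ i : Fin w.edges.length,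
      χ (w.edges.get i) ≠
        χ (w.edges.get ⟨((i : ℕ) + 1) % w.edges.length, Nat.mod_lt _ i.pos⟩)

/-!
Take as vertices the words over the colour alphabet in which each letter `j` occurs at most `p j`
times, join two words when one is a proper prefix of the other, and colour the edge between `u`
and a longer word `v` by the letter `v[|u|]` at which `v` leaves `u`.

On a cycle, a vertex `u` of minimal length has both cycle neighbours strictly extending `u`. The
rest of the cycle stays at length `≥ |u|` without passing through `u`, so it can never leave the
words extending `u ++ [a]`, where `a` is the colour of the first edge; hence the two cycle edges
at `u` both have colour `a`, and no cycle is properly coloured.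

A word `x` has at least `p i` neighbours of colour `i`: its prefixes `y` with `y ++ [i] <+: x`
(there are `count i x` of them) and the words `x ++ i^m` for `1 ≤ m ≤ p i - count i x`. A word in
which every letter `j` occurs exactly `p j` times has maximal length `s`, so it has only the first
kind of neighbours and exactly `p i` of them. Words have length at most `s`, which bounds the order.
-/

open SimpleGraph

/-- The condition on the edge list of a cycle in `HasProperlyColoredCycle`. -/
def CyclicallyProper {β γ : Type*} (f : β → γ) (l : List β) : Prop :=
  ∀ i : Fin l.length, f (l.get i) ≠ f (l.get ⟨(i + 1) % l.length, Nat.mod_lt _ i.pos⟩)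

namespace CyclicallyProper

variable {β γ δ : Type*} {f : γ → δ} {l l' : List γ}

theorem map {g : β → γ} {m : List β} (h : CyclicallyProper (f ∘ g) m) :
    CyclicallyProper f (m.map g) := by
  intro i
  simpa using h ⟨i, by simpa using i.2⟩

theorem of_isRotated (h : CyclicallyProper f l) (hr : l ~r l') : CyclicallyProper f l' := by
  obtain ⟨n, rfl⟩ := hr
  intro i
  have hl : 0 < l.length := by simpa using i.pos
  simp only [List.get_eq_getElem, List.getElem_rotate, List.length_rotate]
  convert h ⟨(i + n) % l.length, Nat.mod_lt _ hl⟩ using 3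
  rw [List.get_eq_getElem]
  congr 1
  rw [Nat.mod_add_mod, Nat.mod_add_mod, Nat.add_right_comm]

theorem last_ne_head {a b : γ} (h : CyclicallyProper f (a :: l ++ [b])) : f b ≠ f a := by
  simpa using h ⟨l.length + 1, by simp⟩

end CyclicallyProper

section ColoredGraph

variable {V W : Type} {c : ℕ} {G : SimpleGraph V} {G' : SimpleGraph W}

theorem HasProperlyColoredCycle.of_embedding {χ : Sym2 W → Fin c} (f : G ↪g G')
    (h : HasProperlyColoredCycle G (χ ∘ Sym2.map f)) : HasProperlyColoredCycle G' χ := by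
  obtain ⟨v, w, hcyc, hprop⟩ := h
  refine ⟨f v, w.map f.toHom, hcyc.map f.injective, ?_⟩
  show CyclicallyProper χ _
  rw [Walk.edges_map]
  exact CyclicallyProper.map hprop

/-- Rotating the cycle to start at `u`, its first and last edges are the two cycle edges at `u`. -/
theorem HasProperlyColoredCycle.exists_bypass {χ : Sym2 V → Fin c}
    (h : HasProperlyColoredCycle G χ) :
    ∃ (v : V) (w : G.Walk v v), ∀ u ∈ w.support, ∃ (v₁ v₂ : V) (W : G.Walk v₁ v₂),
      G.Adj u v₁ ∧ G.Adj u v₂ ∧ χ s(u, v₁) ≠ χ s(u, v₂) ∧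
      u ∉ W.support ∧ W.support ⊆ w.support := by
  classical
  obtain ⟨v, w, hcyc, hprop⟩ := h
  refine ⟨v, w, fun u hu => ?_⟩
  have hrot : CyclicallyProper χ (w.rotate u hu).edges :=
    CyclicallyProper.of_isRotated hprop (w.rotate_edges u hu).symm
  have hsupp : (w.rotate u hu).support ⊆ w.support := fun x hx =>
    (w.mem_support_rotate_iff u hu).mp hx
  have hcyc' := hcyc.rotate hu
  generalize w.rotate u hu = C at hrot hsupp hcyc'
  cases C with
  | nil => exact (Walk.not_isCycle_nil hcyc').elim
  | @cons _ v₁ _ h₁ W₀ =>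
    have hnd : (u :: W₀.reverse.support.tail).Nodup := by
      have := hcyc'.support_nodup
      rw [Walk.support_cons, List.tail_cons] at this
      rwa [Walk.cons_tail_support, Walk.support_reverse, List.nodup_reverse]
    obtain ⟨v₂, h₂, W₁, hW₁⟩ := Walk.not_nil_iff.mp
      (Walk.not_nil_of_ne (p := W₀.reverse) (G.ne_of_adj h₁))
    have hW₀ : W₀.edges = W₁.edges.reverse ++ [s(u, v₂)] := by
      rw [← List.reverse_reverse W₀.edges, ← Walk.edges_reverse, hW₁]
      simp
    rw [hW₁, Walk.support_cons, List.tail_cons] at hnd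
    refine ⟨v₁, v₂, W₁.reverse, h₁, h₂, ?_, ?_, fun x hx => hsupp ?_⟩
    · rw [Walk.edges_cons, hW₀] at hrot
      exact hrot.last_ne_head.symm
    · simpa using (List.nodup_cons.mp hnd).1
    · rw [Walk.support_reverse, List.mem_reverse] at hx
      have hx₀ : x ∈ W₀.reverse.support := by
        rw [hW₁, Walk.support_cons]
        exact List.mem_cons_of_mem _ hx
      rw [Walk.support_reverse, List.mem_reverse] at hx₀
      exact W₀.support_subset_support_cons h₁ hx₀

theorem monDeg_induce (s : Set V) (χ : Sym2 V → Fin c) (x : s) (i : Fin c) :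
    monDeg (G.induce s) (χ ∘ Sym2.map (↑)) x i =
      {y | y ∈ s ∧ G.Adj x y ∧ χ s(↑x, y) = i}.ncard :=
  Nat.card_congr <|
    Equiv.subtypeSubtypeEquivSubtypeInter (· ∈ s) fun y => G.Adj x y ∧ χ s(↑x, y) = i

end ColoredGraph

section PrefixGraph

variable {α : Type*} {u v x y : List α} {e : α}

def prefixGraph (α : Type*) : SimpleGraph (List α) := SimpleGraph.fromRel (· <+: ·)

theorem prefixGraph_adj_of_append_singleton_isPrefix (h : u ++ [e] <+: v) :
    (prefixGraph α).Adj u v := by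
  refine ⟨fun huv => ?_, Or.inl ((List.prefix_append u [e]).trans h)⟩
  simpa [huv] using h.length_le

theorem append_singleton_isPrefix_of_adj (hx : u ++ [e] <+: x) (hxy : (prefixGraph α).Adj x y)
    (hy : u.length ≤ y.length) (hyu : y ≠ u) : u ++ [e] <+: y := by
  obtain ⟨-, hxy | hyx⟩ := hxy
  · exact hx.trans hxy
  · have huy : u <+: y :=
      List.prefix_of_prefix_length_le ((List.prefix_append u [e]).trans hx) hyx hy
    have hlt : u.length < y.length :=
      lt_of_le_of_ne hy fun h => hyu (huy.eq_of_length_le h.ge).symm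
    exact List.prefix_of_prefix_length_le hx hyx (by simpa using hlt)

theorem append_singleton_isPrefix_of_walk {a b : List α} (W : (prefixGraph α).Walk a b)
    (hW : ∀ y ∈ W.support, u.length ≤ y.length ∧ y ≠ u) (ha : u ++ [e] <+: a) :
    u ++ [e] <+: b := by
  induction W with
  | nil => exact ha
  | cons hadj W ih =>
    obtain ⟨hlen, hne⟩ := hW _ (List.mem_cons_of_mem _ W.start_mem_support)
    exact ih (fun y hy => hW y (List.mem_cons_of_mem _ hy))
      (append_singleton_isPrefix_of_adj ha hadj hlen hne)

/-- The default letter is only returned for words of equal length, which are never adjacent. -/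
def branchLetter [Inhabited α] (u v : List α) : α :=
  if u.length < v.length then v.getD u.length default else u.getD v.length default

theorem branchLetter_comm [Inhabited α] (u v : List α) : branchLetter u v = branchLetter v u := by
  unfold branchLetter
  rcases lt_trichotomy u.length v.length with h | h | h
  · rw [if_pos h, if_neg h.not_gt]
  · rw [if_neg h.not_lt, if_neg h.symm.not_lt, List.getD_eq_default _ _ h.ge,
      List.getD_eq_default _ _ h.le]
  · rw [if_neg h.not_gt, if_pos h]

def prefixColoring [Inhabited α] : Sym2 (List α) → α :=
  Sym2.lift ⟨branchLetter, branchLetter_comm⟩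

variable [Inhabited α]

theorem prefixColoring_of_append_singleton_isPrefix (h : u ++ [e] <+: v) :
    prefixColoring s(u, v) = e := by
  obtain ⟨r, rfl⟩ := h
  simp [prefixColoring, branchLetter]

theorem append_prefixColoring_isPrefix_of_adj (h : (prefixGraph α).Adj u v)
    (hle : u.length ≤ v.length) : u ++ [prefixColoring s(u, v)] <+: v := by
  obtain ⟨hne, ⟨r, rfl⟩ | hvu⟩ := h
  · cases r with
    | nil => simp at hne
    | cons e r =>
      rw [prefixColoring_of_append_singleton_isPrefix (e := e) (by simp)]
      simp
  · exact absurd (hvu.eq_of_length_le hle).symm hne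

theorem prefixGraph_adj_and_prefixColoring_eq_iff :
    (prefixGraph α).Adj u v ∧ prefixColoring s(u, v) = e ↔ u ++ [e] <+: v ∨ v ++ [e] <+: u := by
  constructor
  · rintro ⟨h, rfl⟩
    rcases le_total u.length v.length with hle | hle
    · exact Or.inl (append_prefixColoring_isPrefix_of_adj h hle)
    · rw [Sym2.eq_swap]
      exact Or.inr (append_prefixColoring_isPrefix_of_adj h.symm hle)
  · rintro (h | h)
    · exact ⟨prefixGraph_adj_of_append_singleton_isPrefix h,
        prefixColoring_of_append_singleton_isPrefix h⟩
    · rw [Sym2.eq_swap]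
      exact ⟨(prefixGraph_adj_of_append_singleton_isPrefix h).symm,
        prefixColoring_of_append_singleton_isPrefix h⟩

end PrefixGraph

theorem not_hasProperlyColoredCycle_prefixGraph {c : ℕ} [NeZero c] :
    ¬ HasProperlyColoredCycle (prefixGraph (Fin c)) prefixColoring := by
  intro h
  obtain ⟨v, w, hbypass⟩ := h.exists_bypass
  obtain ⟨u, hu, hmin⟩ := Multiset.exists_min_image List.length
    (s := (w.support : Multiset (List (Fin c)))) (by simp)
  obtain ⟨v₁, v₂, W, h₁, h₂, hcol, huW, hWw⟩ := hbypass u hu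
  have hW : ∀ y ∈ W.support, u.length ≤ y.length ∧ y ≠ u :=
    fun y hy => ⟨hmin y (hWw hy), fun h => huW (h ▸ hy)⟩
  have hv₁ := append_prefixColoring_isPrefix_of_adj h₁ (hW v₁ W.start_mem_support).1
  have hv₂ := append_singleton_isPrefix_of_walk W hW hv₁
  exact hcol (prefixColoring_of_append_singleton_isPrefix hv₂).symm

namespace List

theorem ncard_setOf_length_le (α : Type*) [Fintype α] (n : ℕ) :
    {l : List α | l.length ≤ n}.ncard ≤ ∑ k ∈ Finset.range (n + 1), Fintype.card α ^ k := by
  have hunion : {l : List α | l.length ≤ n} =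
      ⋃ k ∈ Finset.range (n + 1), {l : List α | l.length = k} := by
    ext l; simp
  rw [hunion]
  refine (Finset.set_ncard_biUnion_le _ _).trans (Finset.sum_le_sum fun k _ => ?_)
  show Nat.card (List.Vector α k) ≤ _
  simp

variable {α : Type*}

theorem finite_setOf_append_singleton_isPrefix (x : List α) (e : α) :
    {y | y ++ [e] <+: x}.Finite :=
  x.inits.finite_toSet.subset fun y hy => by simpa using (prefix_append y [e]).trans hy

theorem ncard_setOf_append_singleton_isPrefix [DecidableEq α] (x : List α) (e : α) :
    {y | y ++ [e] <+: x}.ncard = x.count e := by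
  induction x with
  | nil => simp
  | cons b x ih =>
    have hset : {y | y ++ [e] <+: b :: x} =
        (if b = e then {[]} else ∅) ∪ cons b '' {y | y ++ [e] <+: x} := by
      ext (_ | ⟨a, y⟩) <;> simp [eq_comm, and_comm]
    rw [hset, count_cons, ← ih]
    by_cases hbe : b = e
    · rw [if_pos hbe, Set.singleton_union,
        Set.ncard_insert_of_notMem (by simp) ((finite_setOf_append_singleton_isPrefix x e).image _),
        Set.ncard_image_of_injective _ cons_injective]
      simp [hbe]
    · rw [if_neg hbe, Set.empty_union, Set.ncard_image_of_injective _ cons_injective]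
      simp [hbe]

theorem length_eq_sum_count [DecidableEq α] [Fintype α] (x : List α) :
    x.length = ∑ a, x.count a := by
  rw [← Multiset.coe_card, ← Multiset.sum_count_eq_card (s := Finset.univ) (by simp)]
  simp only [Multiset.coe_count]

theorem exists_count_eq [DecidableEq α] [Fintype α] (p : α → ℕ) :
    ∃ l : List α, ∀ a, l.count a = p a :=
  ⟨(∑ b, Multiset.replicate (p b) b).toList, fun a => by
    rw [← Multiset.coe_count, Multiset.coe_toList]
    simp [Multiset.count_sum', Multiset.count_replicate]⟩

end List

section BoundedWords

variable {α : Type*} [DecidableEq α]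

def boundedWords (p : α → ℕ) : Set (List α) := {l | ∀ a, l.count a ≤ p a}

variable {p : α → ℕ} {x y : List α}

theorem mem_boundedWords_of_isPrefix (h : x <+: y) (hy : y ∈ boundedWords p) :
    x ∈ boundedWords p :=
  fun a => (h.sublist.count_le a).trans (hy a)

theorem append_replicate_mem_boundedWords (hx : x ∈ boundedWords p) {a : α} {m : ℕ}
    (hm : m ≤ p a - x.count a) : x ++ List.replicate m a ∈ boundedWords p := by
  intro b
  rw [List.count_append, List.count_replicate]
  have := hx b
  split_ifs with hab
  · obtain rfl := beq_iff_eq.mp hab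
    omega
  · omega

variable [Fintype α]

theorem length_le_sum_of_mem_boundedWords (hx : x ∈ boundedWords p) : x.length ≤ ∑ a, p a :=
  (List.length_eq_sum_count x).trans_le (Finset.sum_le_sum fun a _ => hx a)

theorem boundedWords_finite (p : α → ℕ) : (boundedWords p).Finite :=
  (List.finite_length_le α _).subset fun _ => length_le_sum_of_mem_boundedWords

theorem exists_boundedWords_subset_pair (hp : ∑ a, p a = 1) :
    ∃ a, boundedWords p ⊆ {[], [a]} := by
  obtain ⟨a, -, ha⟩ := Finset.exists_ne_zero_of_sum_ne_zero (hp.trans_ne one_ne_zero)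
  refine ⟨a, fun l hl => ?_⟩
  have hlen := length_le_sum_of_mem_boundedWords hl
  rw [hp] at hlen
  match l, hlen with
  | [], _ => simp
  | [b], _ =>
    have hb : 1 ≤ p b := by simpa using hl b
    obtain rfl : b = a := by
      by_contra hba
      have := Finset.sum_le_sum_of_subset (f := p) (Finset.subset_univ {a, b})
      rw [Finset.sum_pair (Ne.symm hba), hp] at this
      omega
    simp

theorem ncard_boundedWords_le (hα : 2 ≤ Fintype.card α) (hs : 0 < ∑ a, p a) :
    (boundedWords p).ncard ≤ (∑ a, p a) * Fintype.card α ^ (∑ a, p a) := by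
  set S := ∑ a, p a
  set c := Fintype.card α
  rcases (show 1 ≤ S from hs).eq_or_lt with hS | hS
  · obtain ⟨a, ha⟩ := exists_boundedWords_subset_pair hS.symm
    calc (boundedWords p).ncard ≤ ({[], [a]} : Set (List α)).ncard :=
          Set.ncard_le_ncard ha (Set.toFinite _)
      _ = 2 := Set.ncard_pair (by simp)
      _ ≤ S * c ^ S := by rw [← hS]; simpa using hα
  · have hgeom : ∑ k ∈ Finset.range S, c ^ k < c ^ S :=
      Nat.geomSum_lt hα fun k hk => Finset.mem_range.mp hk
    calc (boundedWords p).ncard ≤ {l : List α | l.length ≤ S}.ncard :=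
          Set.ncard_le_ncard (fun _ => length_le_sum_of_mem_boundedWords)
            (List.finite_length_le α S)
      _ ≤ ∑ k ∈ Finset.range (S + 1), c ^ k := List.ncard_setOf_length_le α S
      _ ≤ 2 * c ^ S := by rw [Finset.sum_range_succ]; omega
      _ ≤ S * c ^ S := Nat.mul_le_mul_right _ hS

end BoundedWords

section WordGraph

variable {c : ℕ} [NeZero c] (p : Fin c → ℕ)

def wordGraph : SimpleGraph (boundedWords p) := (prefixGraph (Fin c)).induce (boundedWords p)

def wordColoring : Sym2 (boundedWords p) → Fin c := prefixColoring ∘ Sym2.map (↑)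

theorem not_hasProperlyColoredCycle_wordGraph :
    ¬ HasProperlyColoredCycle (wordGraph p) (wordColoring p) :=
  fun h => not_hasProperlyColoredCycle_prefixGraph (h.of_embedding (Embedding.induce _))

variable {p}

theorem monDeg_wordGraph (x : boundedWords p) (i : Fin c) :
    monDeg (wordGraph p) (wordColoring p) x i =
      {y | y ∈ boundedWords p ∧ (x.1 ++ [i] <+: y ∨ y ++ [i] <+: x.1)}.ncard := by
  simp only [wordGraph, wordColoring, monDeg_induce, prefixGraph_adj_and_prefixColoring_eq_iff]

theorem le_monDeg_wordGraph (x : boundedWords p) (i : Fin c) :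
    p i ≤ monDeg (wordGraph p) (wordColoring p) x i := by
  rw [monDeg_wordGraph]
  set N := {y | y ∈ boundedWords p ∧ (x.1 ++ [i] <+: y ∨ y ++ [i] <+: x.1)}
  have hN : N.Finite := (boundedWords_finite p).subset fun _ hy => hy.1
  set E := (fun m => x.1 ++ List.replicate (m + 1) i) '' ↑(Finset.range (p i - x.1.count i))
  have hpre : {y | y ++ [i] <+: x.1} ⊆ N := fun y hy =>
    ⟨mem_boundedWords_of_isPrefix ((List.prefix_append _ _).trans hy) x.2, Or.inr hy⟩
  have hext : E ⊆ N := by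
    rintro _ ⟨m, hm, rfl⟩
    refine ⟨append_replicate_mem_boundedWords x.2 ?_, Or.inl (by simp [List.replicate_succ])⟩
    simp only [Finset.coe_range, Set.mem_Iio] at hm
    omega
  have hdisj : Disjoint {y | y ++ [i] <+: x.1} E := by
    refine Set.disjoint_left.mpr ?_
    rintro _ hy ⟨m, -, rfl⟩
    simpa using hy.length_le
  have hinj : Function.Injective fun m => x.1 ++ List.replicate (m + 1) i :=
    fun m n h => by simpa using congrArg List.length h
  calc p i = x.1.count i + (p i - x.1.count i) := by have := x.2 i; omega
    _ = ({y | y ++ [i] <+: x.1} ∪ E).ncard := by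
      rw [Set.ncard_union_eq hdisj (hN.subset hpre) (hN.subset hext),
        List.ncard_setOf_append_singleton_isPrefix, Set.ncard_image_of_injective _ hinj,
        Set.ncard_coe_finset, Finset.card_range]
    _ ≤ N.ncard := Set.ncard_le_ncard (Set.union_subset hpre hext) hN

theorem monDeg_wordGraph_le {f : boundedWords p} (hf : ∀ a, f.1.count a = p a) (i : Fin c) :
    monDeg (wordGraph p) (wordColoring p) f i ≤ p i := by
  rw [monDeg_wordGraph, ← hf i, ← List.ncard_setOf_append_singleton_isPrefix]
  refine Set.ncard_le_ncard ?_ (List.finite_setOf_append_singleton_isPrefix _ _)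
  rintro y ⟨hy, hfy | hyf⟩
  · have hf_len : f.1.length = ∑ a, p a := by simp only [List.length_eq_sum_count, hf]
    have hy_len := length_le_sum_of_mem_boundedWords hy
    have := hfy.length_le
    simp only [List.length_append, List.length_singleton] at this
    omega
  · exact hyf

theorem minMonDeg_wordGraph :
    minMonDeg (wordGraph p) (wordColoring p) = sInf {k : ℕ | ∃ i : Fin c, p i = k} := by
  obtain ⟨f, hf⟩ := List.exists_count_eq p
  have hfp : f ∈ boundedWords p := fun a => (hf a).le
  apply csInf_eq_csInf_of_forall_exists_le
  · rintro _ ⟨x, i, rfl⟩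
    exact ⟨p i, ⟨i, rfl⟩, le_monDeg_wordGraph x i⟩
  · rintro _ ⟨i, rfl⟩
    exact ⟨_, ⟨⟨f, hfp⟩, i, rfl⟩, monDeg_wordGraph_le (f := ⟨f, hfp⟩) hf i⟩

end WordGraph

/-- The recursive construction `G(p₁,…,p_c)` of the paper, packaged with the
order bound of its Lemma: for nonnegative integers `p₁,…,p_c` with
`s = p₁ + ⋯ + p_c > 0` there is a `c`-edge-colored graph with no properly
colored cycle, minimum monochromatic degree `min {pᵢ}`, and at most `s·c^s`
vertices. -/
theorem exists_no_properly_colored_cycle_order_bound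
    (c : ℕ) (hc : 2 ≤ c) (p : Fin c → ℕ) (hs : 0 < ∑ i, p i) :
    ∃ (V : Type) (_ : Fintype V) (G : SimpleGraph V) (χ : Sym2 V → Fin c),
      ¬ HasProperlyColoredCycle G χ ∧
      minMonDeg G χ = sInf {k : ℕ | ∃ i : Fin c, p i = k} ∧
      Nat.card V ≤ (∑ i, p i) * c ^ (∑ i, p i) := by
  have : NeZero c := ⟨by omega⟩
  refine ⟨boundedWords p, (boundedWords_finite p).fintype, wordGraph p, wordColoring p,
    not_hasProperlyColoredCycle_wordGraph p, minMonDeg_wordGraph, ?_⟩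
  have hcard := ncard_boundedWords_le (p := p) (by simpa using hc) hs
  rwa [Fintype.card_fin, ← Nat.card_coe_set_eq] at hcard
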